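/- arXiv:1004.3019 — 2 statements merged into one kernel-verified Lean document; each statement's English description precedes it below -/
import Mathlib

section
/- Let ρ : SL₂(ℤ) → GL₄(ℂ) be an irreducible representation with ρ(T) = diag(e^{2πi r₁},…,e^{2πi r₄}) for real numbers r_j, and set r = r₁+r₂+r₃+r₄. Then 3r ∈ ℤ. -/
/-!
`det ∘ ρ` is a character of `SL₂(ℤ)`. Writing `T = R S` with `R³ = 1` gives
`det ρ(T)³ = det ρ(S)³`, and `det ρ(T) = e^{2πi r}`, so it suffices that `det ρ(S) = 1`.
Schur's lemma makes `ρ(S)² = ρ(-1)` a scalar, so `ρ(S)` has at most two eigenvalues `±c`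
with `c⁴ = 1`, and `det ρ(S) = (-1)^m` with `m` the dimension of the `-c`-eigenspace.
Irreducibility rules out a `3`-dimensional eigenspace `E` of `ρ(S)`: since `R` permutes
`E, R E, R² E` cyclically, their intersection (of dimension `≥ 3·3 - 2·4`) would be a nonzero
subspace invariant under `S` and `R`, hence under `SL₂(ℤ)`. Hence `m` is even.
-/

open Matrix Real Complex

abbrev SL2Z := Matrix.SpecialLinearGroup (Fin 2) ℤ

def RepInvariant {d : ℕ} (ρ : SL2Z →* GL (Fin d) ℂ) (W : Submodule ℂ (Fin d → ℂ)) : Prop :=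
  ∀ γ : SL2Z, ∀ v ∈ W, ((ρ γ : Matrix (Fin d) (Fin d) ℂ).mulVec v) ∈ W

def RepIrreducible {d : ℕ} (ρ : SL2Z →* GL (Fin d) ℂ) : Prop :=
  (⊥ : Submodule ℂ (Fin d → ℂ)) ≠ ⊤ ∧
    ∀ W : Submodule ℂ (Fin d → ℂ), RepInvariant ρ W → W = ⊥ ∨ W = ⊤

open Module

namespace ModularGroup

def R : SL2Z := T * S⁻¹

lemma R_pow_three : R ^ 3 = 1 := by decide

lemma S_pow_four : S ^ 4 = (1 : SL2Z) := by decide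

lemma S_mul_S : S * S = (-1 : SL2Z) := by decide

lemma T_eq_R_mul_S : T = R * S := by simp [R]

lemma closure_S_R : Subgroup.closure {S, R} = ⊤ := by
  rw [eq_top_iff, ← SpecialLinearGroup.SL2Z_generators, Subgroup.closure_le]
  have hS : S ∈ Subgroup.closure {S, R} := Subgroup.subset_closure (by simp)
  have hR : R ∈ Subgroup.closure {S, R} := Subgroup.subset_closure (by simp)
  rintro _ (rfl | rfl)
  · exact hS
  · rw [T_eq_R_mul_S]; exact mul_mem hR hS

lemma submonoid_closure_S_R : Submonoid.closure {S, R} = ⊤ := by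
  rw [← Subgroup.closure_toSubmonoid_of_isOfFinOrder, closure_S_R, Subgroup.top_toSubmonoid]
  rintro _ (rfl | rfl)
  · exact isOfFinOrder_iff_pow_eq_one.mpr ⟨4, by norm_num, S_pow_four⟩
  · exact isOfFinOrder_iff_pow_eq_one.mpr ⟨3, by norm_num, R_pow_three⟩

end ModularGroup

lemma Submodule.finrank_add_finrank_le_finrank_add_finrank_inf {K V : Type*} [Field K]
    [AddCommGroup V] [Module K V] [FiniteDimensional K V] (s t : Submodule K V) :
    finrank K s + finrank K t ≤ finrank K V + finrank K (s ⊓ t : Submodule K V) := by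
  rw [← finrank_sup_add_finrank_inf_eq]
  exact Nat.add_le_add_right (finrank_le _) _

lemma Matrix.finrank_map_toLin'_of_isUnit {K n : Type*} [Field K] [Fintype n] [DecidableEq n]
    {A : Matrix n n K} (hA : IsUnit A) (p : Submodule K (n → K)) :
    finrank K (p.map (toLin' A)) = finrank K p :=
  (Submodule.equivMapOfInjective _ (mulVec_injective_iff_isUnit.mpr hA) p).finrank_eq.symm

namespace Module.End

variable {K V : Type*} [Field K] [AddCommGroup V] [Module K V]

open Polynomial in
lemma isCompl_eigenspace_of_mul_eq_zero {f : End K V} {a b : K} (hab : a ≠ b)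
    (hf : (f - a • 1) * (f - b • 1) = 0) : IsCompl (f.eigenspace a) (f.eigenspace b) := by
  have hcop : IsCoprime (X - C a) (X - C b) :=
    isCoprime_X_sub_C_of_isUnit_sub (sub_ne_zero.mpr hab).isUnit
  have hker : ∀ c : K, f.eigenspace c = LinearMap.ker (aeval f (X - C c)) := by
    intro c
    rw [eigenspace_def, map_sub, aeval_X, aeval_C, Algebra.algebraMap_eq_smul_one]
  rw [hker, hker]
  refine ⟨disjoint_ker_aeval_of_isCoprime f hcop, codisjoint_iff.mpr ?_⟩
  rw [sup_ker_aeval_eq_ker_aeval_mul_of_coprime f hcop]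
  simp [aeval_X, aeval_C, Algebra.algebraMap_eq_smul_one, hf]

lemma det_eq_of_isCompl_eigenspace [FiniteDimensional K V] {f : End K V} {a b : K}
    (h : IsCompl (f.eigenspace a) (f.eigenspace b)) :
    f.det = a ^ finrank K (f.eigenspace a) * b ^ finrank K (f.eigenspace b) := by
  set e := Submodule.prodEquivOfIsCompl _ _ h
  have hf : f = e.toLinearMap ∘ₗ LinearMap.prodMap (a • LinearMap.id) (b • LinearMap.id) ∘ₗ
      e.symm.toLinearMap := by
    rw [← LinearMap.comp_assoc, LinearEquiv.eq_comp_toLinearMap_symm]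
    ext x <;> simp [e, mem_eigenspace_iff.mp x.2]
  rw [congrArg LinearMap.det hf, LinearMap.det_conj, LinearMap.det_prodMap, LinearMap.det_smul,
    LinearMap.det_smul, LinearMap.det_id, LinearMap.det_id, mul_one, mul_one]

end Module.End

open ModularGroup

section Representation

variable {d : ℕ} {ρ : SL2Z →* GL (Fin d) ℂ}

lemma repInvariant_of_S_R {W : Submodule ℂ (Fin d → ℂ)}
    (hS : ∀ v ∈ W, (ρ S).val *ᵥ v ∈ W) (hR : ∀ v ∈ W, (ρ R).val *ᵥ v ∈ W) :
    RepInvariant ρ W := by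
  intro γ
  induction (submonoid_closure_S_R ▸ Submonoid.mem_top γ : γ ∈ Submonoid.closure {S, R})
    using Submonoid.closure_induction with
  | mem x hx => rcases hx with rfl | rfl; exacts [hS, hR]
  | one => simp
  | mul x y _ _ hx hy => intro v hv; simpa [mulVec_mulVec] using hx _ (hy v hv)

lemma RepIrreducible.exists_eq_smul_one (hirr : RepIrreducible ρ) {A : Matrix (Fin d) (Fin d) ℂ}
    (hA : ∀ γ, Commute A (ρ γ).val) : ∃ μ : ℂ, A = μ • 1 := by
  obtain ⟨v₀, -, hv₀⟩ := (Submodule.ne_bot_iff ⊤).mp hirr.1.symm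
  have : Nontrivial (Fin d → ℂ) := nontrivial_of_ne v₀ 0 hv₀
  obtain ⟨μ, hμ⟩ := End.exists_eigenvalue (toLin' A)
  have hinv : RepInvariant ρ (End.eigenspace (toLin' A) μ) := by
    intro γ v hv
    rw [End.mem_eigenspace_iff, toLin'_apply] at hv ⊢
    rw [mulVec_mulVec, (hA γ).eq, ← mulVec_mulVec, hv, mulVec_smul]
  have htop := (hirr.2 _ hinv).resolve_left hμ
  refine ⟨μ, toLin'.injective (LinearMap.ext fun v => ?_)⟩
  simpa using End.mem_eigenspace_iff.mp (htop ▸ Submodule.mem_top : v ∈ End.eigenspace (toLin' A) μ)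

lemma RepIrreducible.eigenspace_S_eq_top (hirr : RepIrreducible ρ) {μ : ℂ}
    (h : 2 * d < 3 * finrank ℂ (End.eigenspace (toLin' (ρ S).val) μ)) :
    End.eigenspace (toLin' (ρ S).val) μ = ⊤ := by
  set E := End.eigenspace (toLin' (ρ S).val) μ
  set g := toLin' (ρ R).val
  have hg3 : ∀ w, g (g (g w)) = w := fun w => by
    simp only [g, toLin'_apply, mulVec_mulVec, ← Units.val_mul, ← map_mul, ← pow_three, R_pow_three,
      map_one, Units.val_one, one_mulVec]
  have hW : 0 < finrank ℂ ↥(E ⊓ E.map g ⊓ (E.map g).map g) := by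
    have hgE : finrank ℂ (E.map g) = finrank ℂ E := finrank_map_toLin'_of_isUnit (ρ R).isUnit E
    have hg2E : finrank ℂ ((E.map g).map g) = finrank ℂ E :=
      (finrank_map_toLin'_of_isUnit (ρ R).isUnit _).trans hgE
    have h₁ := Submodule.finrank_add_finrank_le_finrank_add_finrank_inf E (E.map g)
    have h₂ := Submodule.finrank_add_finrank_le_finrank_add_finrank_inf (E ⊓ E.map g)
      ((E.map g).map g)
    rw [finrank_fin_fun] at h₁ h₂
    omega
  set W := E ⊓ E.map g ⊓ (E.map g).map g
  have hS : ∀ v ∈ W, (ρ S).val *ᵥ v ∈ W := fun v hv => by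
    rw [← toLin'_apply, End.mem_eigenspace_iff.mp hv.1.1]
    exact W.smul_mem μ hv
  have hR : ∀ v ∈ W, (ρ R).val *ᵥ v ∈ W := by
    rintro v ⟨⟨hvE, hvgE⟩, ⟨_, ⟨w, hw, rfl⟩, rfl⟩⟩
    exact ⟨⟨by rwa [← toLin'_apply, hg3], Submodule.mem_map_of_mem hvE⟩,
      Submodule.mem_map_of_mem hvgE⟩
  rcases hirr.2 W (repInvariant_of_S_R hS hR) with hbot | htop
  · rw [hbot, finrank_bot] at hW
    exact absurd hW (lt_irrefl 0)
  · exact top_le_iff.mp (htop ▸ inf_le_left.trans inf_le_left)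

end Representation

lemma RepIrreducible.finrank_eigenspace_S_ne_three {ρ : SL2Z →* GL (Fin 4) ℂ}
    (hirr : RepIrreducible ρ) (μ : ℂ) :
    finrank ℂ (End.eigenspace (toLin' (ρ S).val) μ) ≠ 3 := by
  intro h
  have htop := hirr.eigenspace_S_eq_top (μ := μ) (by omega)
  rw [htop, finrank_top, finrank_fin_fun] at h
  omega

lemma RepIrreducible.det_S_eq_one {ρ : SL2Z →* GL (Fin 4) ℂ} (hirr : RepIrreducible ρ) :
    (ρ S).val.det = 1 := by
  obtain ⟨μ, hμ⟩ := hirr.exists_eq_smul_one fun γ => ((Commute.neg_one_left γ).map ρ).units_val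
  have hμ2 : μ ^ 2 = 1 := by
    have h := congrArg (· 0 0)
      (show (ρ (-1)).val * (ρ (-1)).val = 1 by simp [← Units.val_mul, ← map_mul])
    simpa [hμ, sq] using h
  obtain ⟨c, hc⟩ := IsAlgClosed.exists_pow_nat_eq μ two_pos
  have hc4 : c ^ 4 = 1 := by rw [← hμ2, ← hc]; ring
  have hc0 : c ≠ -c := by
    intro h
    have : c = 0 := by linear_combination h / 2
    simp [this] at hc4
  set M := (ρ S).val
  have hMM : M * M = c ^ 2 • 1 := by
    rw [hc, ← hμ, ← Units.val_mul, ← map_mul, S_mul_S]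
  have hM : (M - c • 1) * (M - (-c) • 1) = 0 := by
    rw [sub_mul, mul_sub, mul_sub, hMM]
    simp only [mul_smul_comm, smul_mul_assoc, one_mul, mul_one]
    module
  have hf : (toLin' M - c • 1) * (toLin' M - (-c) • 1) = 0 := by
    have := congrArg toLinAlgEquiv' hM
    rwa [map_mul, map_sub, map_sub, map_smul, map_smul, map_one, map_zero] at this
  have hcompl := End.isCompl_eigenspace_of_mul_eq_zero hc0 hf
  have hdim := Submodule.finrank_add_eq_of_isCompl hcompl
  have hp : finrank ℂ (End.eigenspace (toLin' M) c) ≠ 3 := hirr.finrank_eigenspace_S_ne_three c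
  have hq : finrank ℂ (End.eigenspace (toLin' M) (-c)) ≠ 3 :=
    hirr.finrank_eigenspace_S_ne_three (-c)
  rw [finrank_fin_fun] at hdim
  have heven : Even (finrank ℂ (End.eigenspace (toLin' M) (-c))) := Nat.even_iff.mpr (by omega)
  rw [← LinearMap.det_toLin', End.det_eq_of_isCompl_eigenspace hcompl, neg_pow, heven.neg_one_pow,
    one_mul, ← pow_add, hdim, hc4]

theorem stmt_1 (ρ : SL2Z →* GL (Fin 4) ℂ) (hirr : RepIrreducible ρ)
    (r : Fin 4 → ℝ)
    (hT : (ρ ModularGroup.T : Matrix (Fin 4) (Fin 4) ℂ)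
        = Matrix.diagonal fun j => Complex.exp (2 * π * Complex.I * (r j))) :
    ∃ n : ℤ, 3 * (r 0 + r 1 + r 2 + r 3) = n := by
  have hdetT : (ρ T).val.det ^ 3 = 1 :=
    calc (ρ T).val.det ^ 3 = ((ρ R).val ^ 3).det * (ρ S).val.det ^ 3 := by
          rw [T_eq_R_mul_S, map_mul, Units.val_mul, det_mul, mul_pow, det_pow]
      _ = 1 := by
          rw [← Units.val_pow_eq_pow_val, ← map_pow, R_pow_three, hirr.det_S_eq_one]
          simp
  have hdiag : (ρ T).val.det = exp (2 * π * I * ∑ j, (r j : ℂ)) := by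
    rw [hT, det_diagonal, ← Complex.exp_sum, Finset.mul_sum]
  rw [hdiag, ← Complex.exp_nat_mul, Complex.exp_eq_one_iff] at hdetT
  obtain ⟨n, hn⟩ := hdetT
  refine ⟨n, ?_⟩
  have h3 : 3 * ∑ j, (r j : ℂ) = n :=
    mul_right_cancel₀ two_pi_I_ne_zero (by rw [← hn]; push_cast; ring)
  rw [Fin.sum_univ_four] at h3
  exact_mod_cast h3
end

section
/- Let d ≥ 2, let ρ : SL₂(ℤ) → GLd(ℂ) and suppose F ∈ H(k,ρ,υ) is a vector-valued modular form of weight k whose d component functions f₁,…,f_d are linearly independent over ℂ. Then for each n ≤ d, the set {F, D_kF, …, D_k^{n−1}F} is linearly independent over the ring M = ℂ[E₄,E₆] of level-one holomorphic modular forms. -/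
open Real Complex Matrix

/-- The upper half-plane as a subset of `ℂ`. -/
def UH : Set ℂ := {z : ℂ | 0 < z.im}

/-- The normalized Eisenstein series `E_m` as a function of `z` on the upper half-plane:
`E_m(z) = 1 − (2m/B_m) Σ_{n≥1} σ_{m−1}(n) e^{2πinz}`.  (`Ez 2` is the quasimodular `E₂`.) -/
noncomputable def Ez (m : ℕ) (z : ℂ) : ℂ :=
  1 - (2 * m / ((bernoulli m : ℚ) : ℂ)) *
    ∑' n : ℕ, ((∑ d ∈ Nat.divisors (n + 1), d ^ (m - 1) : ℕ) : ℂ) *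
      Complex.exp (2 * π * Complex.I * (n + 1) * z)

/-- The modular derivative in weight `k`, in the variable `z`. -/
noncomputable def serreDz (k : ℝ) (f : ℂ → ℂ) : ℂ → ℂ :=
  fun z => (1 / (2 * π * Complex.I)) * deriv f z - (k / 12 : ℂ) * Ez 2 z * f z

/-- Iterated modular derivative `D_k^n`. -/
noncomputable def serreDzIter : ℕ → ℝ → (ℂ → ℂ) → (ℂ → ℂ)
  | 0, _, f => f
  | n + 1, k, f => serreDz (k + 2 * n) (serreDzIter n k f)

/-- Moderate growth at infinity. -/
def ModerateGrowth (f : ℂ → ℂ) : Prop :=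
  ∃ N : ℕ, ∀ x : ℝ, ∃ Y : ℝ, ∀ y : ℝ, Y ≤ y →
    ‖f (x + y * Complex.I)‖ < y ^ N

/-- `F` is a holomorphic vector-valued modular form of weight `k` for `(ρ, υ)`. -/
def IsVVMF {d : ℕ} (k : ℝ) (ρ : SL2Z →* GL (Fin d) ℂ) (υ : SL2Z → ℂ)
    (F : Fin d → ℂ → ℂ) : Prop :=
  (∀ i, DifferentiableOn ℂ (F i) UH) ∧
  (∀ i, ModerateGrowth (F i)) ∧
  ∀ γ : SL2Z, ∀ z ∈ UH, ∀ i,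
    F i ((((γ : Matrix (Fin 2) (Fin 2) ℤ) 0 0 : ℂ) * z + ((γ : Matrix (Fin 2) (Fin 2) ℤ) 0 1 : ℂ)) /
        (((γ : Matrix (Fin 2) (Fin 2) ℤ) 1 0 : ℂ) * z + ((γ : Matrix (Fin 2) (Fin 2) ℤ) 1 1 : ℂ)))
      = υ γ *
        (((γ : Matrix (Fin 2) (Fin 2) ℤ) 1 0 : ℂ) * z
            + ((γ : Matrix (Fin 2) (Fin 2) ℤ) 1 1 : ℂ)) ^ (k : ℂ) *
        ∑ j, ((ρ γ : Matrix (Fin d) (Fin d) ℂ) i j) * F j z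

/-!
Expanding `D_k^j` in ordinary derivatives gives `D_k^j = (2πi)⁻ʲ ∂ʲ + ∑_{l<j} a_{j,l} ∂ˡ` with
holomorphic `a_{j,l}`. By induction on `n` it suffices to show that the last coefficient `M_{n-1}`
vanishes. If `M_{n-1}(z₀) ≠ 0`, the relation is a linear ODE of order `n - 1`, satisfied by every
component of `F`, whose leading coefficient does not vanish near `z₀`. A solution is then
determined by its jet `(f, f', …, f⁽ⁿ⁻²⁾)(z₀)`: uniqueness for the companion first-order system
along a horizontal segment through `z₀`, then the identity theorem. Hence the jet map is injective
on the `d`-dimensional span of the components, forcing `d ≤ n - 1`.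
-/

open Finset Filter Topology

lemma isOpen_UH : IsOpen UH := isOpen_lt continuous_const Complex.continuous_im

lemma isPreconnected_UH : IsPreconnected UH := (convex_halfSpace_im_gt 0).isPreconnected

lemma differentiableOn_tsum_mul_cexp {a : ℕ → ℂ} {p : ℕ} (ha : ∀ n, ‖a n‖ ≤ ((n : ℝ) + 1) ^ p) :
    DifferentiableOn ℂ (fun z => ∑' n : ℕ, a n * cexp (2 * π * I * (n + 1) * z)) UH := by
  intro z₀ hz₀
  -- uniform convergence on the half-plane `ε < im z`, which is a neighbourhood of `z₀`
  set ε := z₀.im / 2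
  have hV : IsOpen {z : ℂ | ε < z.im} := isOpen_lt continuous_const Complex.continuous_im
  have hz₀V : z₀ ∈ {z : ℂ | ε < z.im} := by
    change z₀.im / 2 < z₀.im; linarith [show 0 < z₀.im from hz₀]
  set r := Real.exp (-(2 * π * ε))
  have hr : ‖r‖ < 1 := by
    rw [Real.norm_of_nonneg (Real.exp_nonneg _), Real.exp_lt_one_iff, neg_lt_zero]
    have : 0 < ε := half_pos hz₀
    positivity
  have hsum : Summable fun n : ℕ => ((n : ℝ) + 1) ^ p * r ^ (n + 1) := by
    simpa [Function.comp_def] using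
      (summable_pow_mul_geometric_of_norm_lt_one p hr).comp_injective (add_left_injective 1)
  have hbound (n : ℕ) (w : ℂ) (hw : ε < w.im) :
      ‖a n * cexp (2 * π * I * (n + 1) * w)‖ ≤ ((n : ℝ) + 1) ^ p * r ^ (n + 1) := by
    rw [norm_mul, Complex.norm_exp, ← Real.exp_nat_mul]
    gcongr
    · exact ha n
    · have : (2 * π * I * (n + 1) * w).re = -(2 * π * ((n : ℝ) + 1) * w.im) := by
        simp
      rw [this]; push_cast
      nlinarith [Real.pi_pos, mul_le_mul_of_nonneg_left hw.le
        (by positivity : (0 : ℝ) ≤ 2 * π * ((n : ℝ) + 1))]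
  have hV' := differentiableOn_tsum_of_summable_norm hsum (fun n => by fun_prop) hV hbound
  exact (hV'.differentiableAt (hV.mem_nhds hz₀V)).differentiableWithinAt

lemma analyticOnNhd_Ez (m : ℕ) : AnalyticOnNhd ℂ (Ez m) UH := by
  refine (DifferentiableOn.const_sub (DifferentiableOn.const_mul ?_ _) _).analyticOnNhd isOpen_UH
  refine differentiableOn_tsum_mul_cexp (p := m + 1) fun n => ?_
  rw [Complex.norm_natCast, ← ArithmeticFunction.sigma_apply]
  exact_mod_cast (ArithmeticFunction.sigma_le_pow_succ (m - 1) (n + 1)).trans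
    (Nat.pow_le_pow_right n.succ_pos (by omega))

lemma analyticOnNhd_of_mem_adjoin {U : Set ℂ} {S : Set (ℂ → ℂ)} (hS : ∀ g ∈ S, AnalyticOnNhd ℂ g U)
    {f : ℂ → ℂ} (hf : f ∈ Algebra.adjoin ℂ S) : AnalyticOnNhd ℂ f U := by
  induction hf using Algebra.adjoin_induction with
  | mem g hg => exact hS g hg
  | algebraMap c => exact analyticOnNhd_const
  | add g h _ _ hg hh => exact hg.add hh
  | mul g h _ _ hg hh => exact hg.mul hh

theorem AnalyticOnNhd.iteratedDeriv {𝕜 : Type*} [NontriviallyNormedField 𝕜] {E : Type*}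
    [NormedAddCommGroup E] [NormedSpace 𝕜 E] [CompleteSpace E] {f : 𝕜 → E} {s : Set 𝕜}
    (hf : AnalyticOnNhd 𝕜 f s) (n : ℕ) : AnalyticOnNhd 𝕜 (iteratedDeriv n f) s := by
  simpa only [iteratedDeriv_eq_iterate] using hf.iterated_deriv n

/-- The coefficients of `c • P' - g • P` in the basis `f⁽ˡ⁾` when `P = ∑ₗ a l • f⁽ˡ⁾`. -/
noncomputable def derivCoeff (c : ℂ) (g : ℂ → ℂ) (a : ℕ → ℂ → ℂ) : ℕ → ℂ → ℂ
  | 0 => fun z => c * deriv (a 0) z - g z * a 0 z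
  | l + 1 => fun z => c * deriv (a (l + 1)) z - g z * a (l + 1) z + c * a l z

section derivCoeff

variable {U : Set ℂ} {c : ℂ} {g : ℂ → ℂ} {a : ℕ → ℂ → ℂ}

lemma analyticOnNhd_derivCoeff (hg : AnalyticOnNhd ℂ g U) (ha : ∀ l, AnalyticOnNhd ℂ (a l) U) :
    ∀ l, AnalyticOnNhd ℂ (derivCoeff c g a l) U
  | 0 => (analyticOnNhd_const.mul (ha 0).deriv).sub (hg.mul (ha 0))
  | l + 1 => ((analyticOnNhd_const.mul (ha (l + 1)).deriv).sub (hg.mul (ha (l + 1)))).add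
      (analyticOnNhd_const.mul (ha l))

lemma derivCoeff_eq_zero {j : ℕ} (ha : ∀ l, j < l → a l = 0) {l : ℕ} (hl : j + 1 < l) :
    derivCoeff c g a l = 0 := by
  obtain ⟨l, rfl⟩ : ∃ l', l = l' + 1 := ⟨l - 1, by omega⟩
  funext z
  simp [derivCoeff, ha l (by omega), ha (l + 1) (by omega)]

lemma derivCoeff_succ {j : ℕ} (ha : a (j + 1) = 0) :
    derivCoeff c g a (j + 1) = fun z => c * a j z := by
  funext z
  simp [derivCoeff, ha]

lemma sum_derivCoeff_mul_iteratedDeriv (hU : IsOpen U) (ha : ∀ l, AnalyticOnNhd ℂ (a l) U)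
    {j : ℕ} (haj : a (j + 1) = 0) {f : ℂ → ℂ} (hf : AnalyticOnNhd ℂ f U) {P : ℂ → ℂ}
    (hP : ∀ z ∈ U, P z = ∑ l ∈ range (j + 1), a l z * iteratedDeriv l f z) {z : ℂ} (hz : z ∈ U) :
    c * deriv P z - g z * P z =
      ∑ l ∈ range (j + 2), derivCoeff c g a l z * iteratedDeriv l f z := by
  set F : ℕ → ℂ := fun l => iteratedDeriv l f z
  have hderiv : deriv P z = ∑ l ∈ range (j + 1), (deriv (a l) z * F l + a l z * F (l + 1)) := by
    have hdiff (l : ℕ) : DifferentiableAt ℂ (iteratedDeriv l f) z :=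
      (hf.iteratedDeriv l z hz).differentiableAt
    rw [EventuallyEq.deriv_eq (eventually_of_mem (hU.mem_nhds hz) hP),
      deriv_fun_sum (A := fun l y => a l y * iteratedDeriv l f y)
        fun l _ => (ha l z hz).differentiableAt.mul (hdiff l)]
    refine sum_congr rfl fun l _ => ?_
    rw [deriv_fun_mul (ha l z hz).differentiableAt (hdiff l)]
    simp only [F, iteratedDeriv_succ]
  set D : ℕ → ℂ := fun l => (c * deriv (a l) z - g z * a l z) * F l
  have hD : D (j + 1) = 0 := by simp [D, haj]
  calc c * deriv P z - g z * P z
      = ∑ l ∈ range (j + 1), D l + ∑ l ∈ range (j + 1), c * a l z * F (l + 1) := by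
        rw [hderiv, hP z hz, mul_sum, mul_sum, ← sum_sub_distrib, ← sum_add_distrib]
        exact sum_congr rfl fun l _ => by simp only [D, F]; ring
    _ = (∑ l ∈ range (j + 1), D (l + 1) + D 0) + ∑ l ∈ range (j + 1), c * a l z * F (l + 1) := by
        rw [← sum_range_succ' D, sum_range_succ D (j + 1), hD, add_zero]
    _ = ∑ l ∈ range (j + 2), derivCoeff c g a l z * F l := by
        rw [sum_range_succ' _ (j + 1), add_right_comm, ← sum_add_distrib]
        congr 1
        exact sum_congr rfl fun l _ => by simp only [D, derivCoeff]; ring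

end derivCoeff

noncomputable def serreCoeff (k : ℝ) : ℕ → ℕ → ℂ → ℂ
  | 0 => fun l _ => if l = 0 then 1 else 0
  | j + 1 => derivCoeff (1 / (2 * π * I)) (fun z => ((k + 2 * j : ℝ) : ℂ) / 12 * Ez 2 z)
      (serreCoeff k j)

lemma analyticOnNhd_serreCoeff (k : ℝ) : ∀ j l, AnalyticOnNhd ℂ (serreCoeff k j l) UH
  | 0, _ => analyticOnNhd_const
  | j + 1, l => analyticOnNhd_derivCoeff (analyticOnNhd_const.mul (analyticOnNhd_Ez 2))
      (analyticOnNhd_serreCoeff k j) l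

lemma serreCoeff_eq_zero (k : ℝ) : ∀ {j l : ℕ}, j < l → serreCoeff k j l = 0
  | 0, l, hl => by funext z; simp [serreCoeff, Nat.pos_iff_ne_zero.mp hl]
  | j + 1, _, hl => derivCoeff_eq_zero (fun _ => serreCoeff_eq_zero k) hl

lemma serreCoeff_self (k : ℝ) : ∀ j, serreCoeff k j j = fun _ => (1 / (2 * π * I)) ^ j
  | 0 => by funext z; simp [serreCoeff]
  | j + 1 => by
    rw [serreCoeff, derivCoeff_succ (serreCoeff_eq_zero k j.lt_succ_self), serreCoeff_self k j]
    funext z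
    ring

lemma serreDzIter_eq_sum (k : ℝ) {f : ℂ → ℂ} (hf : AnalyticOnNhd ℂ f UH) :
    ∀ j, ∀ z ∈ UH,
      serreDzIter j k f z = ∑ l ∈ range (j + 1), serreCoeff k j l z * iteratedDeriv l f z
  | 0, z, _ => by simp [serreDzIter, serreCoeff]
  | j + 1, z, hz => sum_derivCoeff_mul_iteratedDeriv (c := 1 / (2 * π * I))
      (g := fun z => ((k + 2 * j : ℝ) : ℂ) / 12 * Ez 2 z) isOpen_UH (analyticOnNhd_serreCoeff k j)
      (serreCoeff_eq_zero k j.lt_succ_self) hf (serreDzIter_eq_sum k hf j) hz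

lemma sum_mul_serreDzIter_eq (k : ℝ) {n : ℕ} (M : Fin (n + 1) → ℂ → ℂ) {f : ℂ → ℂ}
    (hf : AnalyticOnNhd ℂ f UH) {z : ℂ} (hz : z ∈ UH) :
    ∑ j, M j z * serreDzIter j k f z =
      ∑ l ∈ range (n + 1), (∑ j, M j z * serreCoeff k j l z) * iteratedDeriv l f z := by
  have hext (j : Fin (n + 1)) : serreDzIter j k f z =
      ∑ l ∈ range (n + 1), serreCoeff k j l z * iteratedDeriv l f z := by
    rw [serreDzIter_eq_sum k hf j z hz]
    refine (eventually_constant_sum (fun l hl => ?_) (by omega)).symm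
    simp [serreCoeff_eq_zero k (show (j : ℕ) < l by omega)]
  simp only [hext, mul_sum, sum_mul]
  rw [sum_comm]
  exact sum_congr rfl fun l _ => sum_congr rfl fun j _ => by ring

lemma sum_mul_serreCoeff_last (k : ℝ) {n : ℕ} (M : Fin (n + 1) → ℂ → ℂ) (z : ℂ) :
    ∑ j, M j z * serreCoeff k j n z = M (Fin.last n) z * (1 / (2 * π * I)) ^ n := by
  simp [Fin.sum_univ_castSucc, serreCoeff_eq_zero k (Fin.is_lt _), serreCoeff_self]

noncomputable def jet (m : ℕ) (f : ℂ → ℂ) (z : ℂ) : Fin m → ℂ := fun l => iteratedDeriv l f z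

/-- The first-order system on jets equivalent to `y⁽ᵐ⁾ = -∑_{i<m} r i • y⁽ⁱ⁾`. -/
def companion {m : ℕ} (r : Fin m → ℂ) : (Fin m → ℂ) →ₗ[ℂ] Fin m → ℂ where
  toFun x l := if h : (l : ℕ) + 1 < m then x ⟨l + 1, h⟩ else -∑ i, r i * x i
  map_add' x y := by
    ext l; by_cases h : (l : ℕ) + 1 < m <;> simp [h, mul_add, sum_add_distrib, add_comm]
  map_smul' s x := by
    ext l; by_cases h : (l : ℕ) + 1 < m <;> simp [h, mul_sum, mul_left_comm]

lemma norm_companion_apply_le {m : ℕ} (r : Fin m → ℂ) (x : Fin m → ℂ) :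
    ‖companion r x‖ ≤ (1 + ∑ i, ‖r i‖) * ‖x‖ := by
  have hr : 0 ≤ ∑ i, ‖r i‖ := sum_nonneg fun _ _ => norm_nonneg _
  refine (pi_norm_le_iff_of_nonneg (by positivity)).2 fun l => ?_
  simp only [companion, LinearMap.coe_mk, AddHom.coe_mk]
  split_ifs
  · exact (norm_le_pi_norm x _).trans (le_mul_of_one_le_left (norm_nonneg _) (by linarith))
  · calc ‖-∑ i, r i * x i‖ ≤ ∑ i, ‖r i‖ * ‖x‖ := by
          rw [norm_neg]
          refine (norm_sum_le _ _).trans (sum_le_sum fun i _ => ?_)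
          rw [norm_mul]
          gcongr
          exact norm_le_pi_norm x i
      _ ≤ (1 + ∑ i, ‖r i‖) * ‖x‖ := by rw [← sum_mul]; gcongr; linarith

lemma companion_jet {m : ℕ} {B : ℕ → ℂ → ℂ} {f : ℂ → ℂ} {z : ℂ} (hBm : B m z ≠ 0)
    (hode : ∑ l ∈ range (m + 1), B l z * iteratedDeriv l f z = 0) :
    companion (fun i : Fin m => B i z / B m z) (jet m f z) =
      fun l : Fin m => iteratedDeriv (l + 1) f z := by
  ext l
  simp only [companion, jet, LinearMap.coe_mk, AddHom.coe_mk]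
  split_ifs with h
  · rfl
  · rw [show (l : ℕ) + 1 = m by omega, Fin.sum_univ_eq_sum_range
      (fun i => B i z / B m z * iteratedDeriv i f z)]
    simp_rw [div_mul_eq_mul_div, ← sum_div]
    rw [sum_range_succ] at hode
    field_simp
    linear_combination -hode

lemma hasDerivAt_jet_ofReal {U : Set ℂ} {f : ℂ → ℂ} (hf : AnalyticOnNhd ℂ f U) (m : ℕ)
    {z₀ : ℂ} {t : ℝ} (ht : z₀ + t ∈ U) :
    HasDerivAt (fun u : ℝ => jet m f (z₀ + u))
      (fun l : Fin m => iteratedDeriv (l + 1) f (z₀ + t)) t := by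
  refine hasDerivAt_pi.2 fun l => ?_
  have h : HasDerivAt (iteratedDeriv l f) (iteratedDeriv (l + 1) f (z₀ + t)) (z₀ + t) := by
    rw [iteratedDeriv_succ]
    exact ((hf.iteratedDeriv l) _ ht).differentiableAt.hasDerivAt
  exact (h.comp_const_add z₀ t).comp_ofReal

theorem eventually_jet_eq_zero_of_linearODE {U : Set ℂ} (hU : IsOpen U) {m : ℕ}
    {B : ℕ → ℂ → ℂ} (hB : ∀ l, ContinuousOn (B l) U) {f : ℂ → ℂ} (hf : AnalyticOnNhd ℂ f U)
    (hode : ∀ z ∈ U, ∑ l ∈ range (m + 1), B l z * iteratedDeriv l f z = 0)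
    {z₀ : ℂ} (hz₀ : z₀ ∈ U) (hBm : B m z₀ ≠ 0) (hjet : jet m f z₀ = 0) :
    ∀ᶠ t : ℝ in 𝓝 0, jet m f (z₀ + t) = 0 := by
  have hline : ContinuousAt (fun t : ℝ => z₀ + t) 0 := by fun_prop
  have hB₀ (l : ℕ) : ContinuousAt (fun t : ℝ => B l (z₀ + t)) 0 :=
    ((hB l).continuousAt (hU.mem_nhds hz₀)).comp_of_eq hline (by simp)
  have hnear : ∀ᶠ t : ℝ in 𝓝 0, z₀ + t ∈ U ∧ B m (z₀ + t) ≠ 0 :=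
    (hline.eventually_mem (by simpa using hU.mem_nhds hz₀)).and
      ((hB₀ m).eventually_ne (by simpa using hBm))
  -- `X t = jet m f (z₀ + t)` and `X = 0` both solve `X' = companion (r t) X`
  let r (t : ℝ) (i : Fin m) : ℂ := B i (z₀ + t) / B m (z₀ + t)
  have hr : ContinuousAt (fun t => ∑ i, ‖r t i‖) 0 := by
    have (i : Fin m) : ContinuousAt (fun t => r t i) 0 :=
      (hB₀ i).div (hB₀ m) (by simpa using hBm)
    fun_prop
  set C := ∑ i, ‖r 0 i‖ + 1
  have hlip : ∀ᶠ t in 𝓝 0, LipschitzOnWith (1 + C).toNNReal (companion (r t)) Set.univ := by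
    filter_upwards [hr.eventually_lt continuousAt_const (lt_add_one _)] with t ht
    refine (AddMonoidHomClass.lipschitz_of_bound _ _ fun x => ?_).lipschitzOnWith
    exact (norm_companion_apply_le _ x).trans
      (mul_le_mul_of_nonneg_right (by linarith) (norm_nonneg x))
  have hX : ∀ᶠ t in 𝓝 0, HasDerivAt (fun u : ℝ => jet m f (z₀ + u))
      (companion (r t) (jet m f (z₀ + t))) t ∧ jet m f (z₀ + t) ∈ Set.univ := by
    filter_upwards [hnear] with t ⟨htU, htB⟩
    refine ⟨?_, trivial⟩
    convert hasDerivAt_jet_ofReal hf m htU using 1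
    exact companion_jet htB (hode _ htU)
  have h0 : ∀ᶠ t in 𝓝 0, HasDerivAt (fun _ : ℝ => (0 : Fin m → ℂ)) (companion (r t) 0) t ∧
      (0 : Fin m → ℂ) ∈ Set.univ :=
    Eventually.of_forall fun t => ⟨by simpa using hasDerivAt_const t (0 : Fin m → ℂ), trivial⟩
  exact ODE_solution_unique_of_eventually hlip hX h0 (by simpa using hjet)

theorem eqOn_zero_of_linearODE {U : Set ℂ} (hU : IsOpen U) (hU' : IsPreconnected U) {m : ℕ}
    {B : ℕ → ℂ → ℂ} (hB : ∀ l, ContinuousOn (B l) U) {f : ℂ → ℂ} (hf : AnalyticOnNhd ℂ f U)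
    (hode : ∀ z ∈ U, ∑ l ∈ range (m + 1), B l z * iteratedDeriv l f z = 0)
    {z₀ : ℂ} (hz₀ : z₀ ∈ U) (hBm : B m z₀ ≠ 0) (hjet : jet m f z₀ = 0) :
    Set.EqOn f 0 U := by
  refine hf.eqOn_zero_of_preconnected_of_frequently_eq_zero hU' hz₀ ?_
  rcases m with _ | m
  · have : ∀ᶠ z in 𝓝 z₀, f z = 0 := by
      filter_upwards [hU.mem_nhds hz₀,
        ((hB 0).continuousAt (hU.mem_nhds hz₀)).eventually_ne hBm] with z hz hBz
      simpa [hBz] using hode z hz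
    exact (this.filter_mono nhdsWithin_le_nhds).frequently
  · have hline : Tendsto (fun t : ℝ => z₀ + t) (𝓝[≠] 0) (𝓝[≠] z₀) := by
      refine tendsto_nhdsWithin_of_tendsto_nhds_of_eventually_within _ ?_
        (eventually_nhdsWithin_of_forall fun t ht => by simpa using ht)
      exact ((continuous_const.add Complex.continuous_ofReal).tendsto' 0 z₀ (by simp)).mono_left
        nhdsWithin_le_nhds
    refine hline.frequently (Eventually.frequently ?_)
    filter_upwards [nhdsWithin_le_nhds
      (eventually_jet_eq_zero_of_linearODE hU hB hf hode hz₀ hBm hjet)] with t ht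
    simpa [jet] using congrFun ht 0

lemma iteratedDeriv_fun_sum_mul {𝕜 : Type*} [NontriviallyNormedField 𝕜] {ι : Type*} [Fintype ι]
    {F : ι → 𝕜 → 𝕜} {z : 𝕜} {l : ℕ} (hF : ∀ i, ContDiffAt 𝕜 l (F i) z) (c : ι → 𝕜) :
    iteratedDeriv l (fun w => ∑ i, c i * F i w) z = ∑ i, c i * iteratedDeriv l (F i) z := by
  rw [iteratedDeriv_fun_sum (f := fun i w => c i * F i w) fun i _ => contDiffAt_const.mul (hF i)]
  simp

theorem card_le_of_linearODE {ι : Type*} [Fintype ι] {U : Set ℂ} (hU : IsOpen U)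
    (hU' : IsPreconnected U) {F : ι → ℂ → ℂ} (hF : ∀ i, AnalyticOnNhd ℂ (F i) U)
    (hind : ∀ c : ι → ℂ, (∀ z ∈ U, ∑ i, c i * F i z = 0) → c = 0)
    {m : ℕ} {B : ℕ → ℂ → ℂ} (hB : ∀ l, ContinuousOn (B l) U)
    (hode : ∀ i, ∀ z ∈ U, ∑ l ∈ range (m + 1), B l z * iteratedDeriv l (F i) z = 0)
    {z₀ : ℂ} (hz₀ : z₀ ∈ U) (hBm : B m z₀ ≠ 0) :
    Fintype.card ι ≤ m := by
  suffices LinearIndependent ℂ fun i => jet m (F i) z₀ by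
    simpa using this.fintype_card_le_finrank
  refine Fintype.linearIndependent_iff.2 fun c hc => congrFun (hind c fun z hz => ?_)
  have hlin : ∀ z ∈ U, ∀ l, iteratedDeriv l (fun w => ∑ i, c i * F i w) z =
      ∑ i, c i * iteratedDeriv l (F i) z :=
    fun z hz l => iteratedDeriv_fun_sum_mul (fun i => (hF i z hz).contDiffAt) c
  have hf : AnalyticOnNhd ℂ (fun w => ∑ i, c i * F i w) U := fun z hz =>
    Finset.analyticAt_fun_sum _ fun i _ => analyticAt_const.mul (hF i z hz)
  refine eqOn_zero_of_linearODE hU hU' hB hf (fun z hz => ?_) hz₀ hBm ?_ hz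
  · calc ∑ l ∈ range (m + 1), B l z * iteratedDeriv l (fun w => ∑ i, c i * F i w) z
        = ∑ i, c i * ∑ l ∈ range (m + 1), B l z * iteratedDeriv l (F i) z := by
          simp_rw [hlin z hz, mul_sum]
          rw [sum_comm]
          exact sum_congr rfl fun _ _ => sum_congr rfl fun _ _ => by ring
      _ = 0 := by simp [hode _ z hz]
  · ext l
    simpa [jet, hlin z₀ hz₀] using congrFun hc l

theorem eq_zero_of_sum_mul_serreDzIter_eq_zero {ι : Type*} [Fintype ι] {F : ι → ℂ → ℂ}
    (hF : ∀ i, AnalyticOnNhd ℂ (F i) UH)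
    (hind : ∀ c : ι → ℂ, (∀ z ∈ UH, ∑ i, c i * F i z = 0) → c = 0) (k : ℝ) :
    ∀ {n : ℕ}, n ≤ Fintype.card ι → ∀ M : Fin n → ℂ → ℂ, (∀ j, AnalyticOnNhd ℂ (M j) UH) →
      (∀ i, ∀ z ∈ UH, ∑ j, M j z * serreDzIter j k (F i) z = 0) → ∀ j, ∀ z ∈ UH, M j z = 0
  | 0, _, _, _, _ => fun j => j.elim0
  | n + 1, hn, M, hM, hrel => by
    have hlast : ∀ z ∈ UH, M (Fin.last n) z = 0 := by
      by_contra! ⟨z₀, hz₀, hne⟩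
      have := card_le_of_linearODE isOpen_UH isPreconnected_UH hF hind
        (B := fun l z => ∑ j, M j z * serreCoeff k j l z)
        (fun l => (Finset.analyticOnNhd_fun_sum _ fun j _ =>
          (hM j).mul (analyticOnNhd_serreCoeff k j l)).continuousOn)
        (fun i z hz => (sum_mul_serreDzIter_eq k M (hF i) hz).symm.trans (hrel i z hz)) hz₀
        (by rw [sum_mul_serreCoeff_last]; exact mul_ne_zero hne (by simp [pi_ne_zero, I_ne_zero]))
      omega
    have hinit := eq_zero_of_sum_mul_serreDzIter_eq_zero hF hind k (by omega)
      (fun j => M j.castSucc) (fun j => hM _)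
      (fun i z hz => by simpa [Fin.sum_univ_castSucc, hlast z hz] using hrel i z hz)
    exact fun j => Fin.lastCases hlast hinit j

theorem stmt_11_general {d : ℕ} (n : ℕ) (hn : n ≤ d) (k : ℝ)
    (ρ : SL2Z →* GL (Fin d) ℂ) (υ : SL2Z → ℂ) (F : Fin d → ℂ → ℂ)
    (hF : IsVVMF k ρ υ F)
    (hind : ∀ c : Fin d → ℂ, (∀ z ∈ UH, ∑ i, c i * F i z = 0) → c = 0) :
    ∀ M : Fin n → (ℂ → ℂ),
      (∀ j, M j ∈ Algebra.adjoin ℂ ({Ez 4, Ez 6} : Set (ℂ → ℂ))) →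
      (∀ i, ∀ z ∈ UH, ∑ j, M j z * serreDzIter (j : ℕ) k (F i) z = 0) →
      ∀ j : Fin n, ∀ z ∈ UH, M j z = 0 := by
  intro M hM hrel
  have hEz : ∀ g ∈ ({Ez 4, Ez 6} : Set (ℂ → ℂ)), AnalyticOnNhd ℂ g UH := by
    rintro g (rfl | rfl) <;> exact analyticOnNhd_Ez _
  exact eq_zero_of_sum_mul_serreDzIter_eq_zero (fun i => (hF.1 i).analyticOnNhd isOpen_UH) hind k
    (by simpa using hn) M (fun j => analyticOnNhd_of_mem_adjoin hEz (hM j)) hrel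

/-- If the `d` components of a vector-valued modular form `F` of weight `k` are linearly
independent, then `F, D_kF, …, D_k^{n−1}F` (`n ≤ d`) are linearly independent over the
ring `M = ℂ[E₄,E₆]` of level-one holomorphic modular forms. -/
theorem stmt_11 {d : ℕ} (hd : 2 ≤ d) (n : ℕ) (hn : n ≤ d) (k : ℝ)
    (ρ : SL2Z →* GL (Fin d) ℂ) (υ : SL2Z → ℂ) (F : Fin d → ℂ → ℂ)
    (hF : IsVVMF k ρ υ F)
    (hind : ∀ c : Fin d → ℂ, (∀ z ∈ UH, ∑ i, c i * F i z = 0) → c = 0) :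
    ∀ M : Fin n → (ℂ → ℂ),
      (∀ j, M j ∈ Algebra.adjoin ℂ ({Ez 4, Ez 6} : Set (ℂ → ℂ))) →
      (∀ i, ∀ z ∈ UH, ∑ j, M j z * serreDzIter (j : ℕ) k (F i) z = 0) →
      ∀ j : Fin n, ∀ z ∈ UH, M j z = 0 :=
  stmt_11_general n hn k ρ υ F hF hind
end
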